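/- arXiv:1705.10086 — 8 statements merged into one kernel-verified Lean document; each statement's English description precedes it below -/
import Mathlib

section
/- Suppose b ∈ ℂ^m is a vector such that D⁻¹ B b lies in the column space of V. Then H b = H̃ b, i.e., C D⁻¹ B b = (C V) (W* D V)⁻¹ (W* B) b. -/
open Matrix

/-- Theorem 2.1 (i): if `D⁻¹ B b ∈ Col(V)`, then `H b = H̃ b` where
`H = C D⁻¹ B` and `H̃ = (C V)(Wᴴ D V)⁻¹ (Wᴴ B)`. -/
theorem subspace_interpolation_right
    {n m p k : ℕ}
    (B : Matrix (Fin n) (Fin m) ℂ) (C : Matrix (Fin p) (Fin n) ℂ)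
    (D : Matrix (Fin n) (Fin n) ℂ) (V W : Matrix (Fin n) (Fin k) ℂ)
    (hD : IsUnit D) (hWDV : IsUnit (Wᴴ * D * V))
    (b : Fin m → ℂ)
    (hb : (D⁻¹ * B).mulVec b ∈ LinearMap.range V.mulVecLin) :
    (C * D⁻¹ * B).mulVec b =
      (C * V * (Wᴴ * D * V)⁻¹ * (Wᴴ * B)).mulVec b := by
  obtain ⟨c, hc⟩ := hb
  have hc' : V.mulVec c = (D⁻¹ * B).mulVec b := hc
  have hdet : IsUnit D.det := (isUnit_iff_isUnit_det D).mp hD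
  have hdet2 : IsUnit (Wᴴ * D * V).det := (isUnit_iff_isUnit_det _).mp hWDV
  have hDB : B.mulVec b = (D * V).mulVec c := by
    rw [← mulVec_mulVec, hc', mulVec_mulVec, ← Matrix.mul_assoc,
      mul_nonsing_inv D hdet, Matrix.one_mul]
  have hWB : (Wᴴ * B).mulVec b = (Wᴴ * D * V).mulVec c := by
    rw [← mulVec_mulVec, hDB, mulVec_mulVec, Matrix.mul_assoc]
  have hinv : ((Wᴴ * D * V)⁻¹ * (Wᴴ * B)).mulVec b = c := by
    rw [← mulVec_mulVec, hWB, mulVec_mulVec, nonsing_inv_mul _ hdet2, one_mulVec]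
  calc (C * D⁻¹ * B).mulVec b = C.mulVec ((D⁻¹ * B).mulVec b) := by
        rw [mulVec_mulVec, Matrix.mul_assoc]
    _ = (C * V).mulVec c := by rw [← hc', mulVec_mulVec]
    _ = (C * V).mulVec (((Wᴴ * D * V)⁻¹ * (Wᴴ * B)).mulVec b) := by rw [hinv]
    _ = _ := by rw [mulVec_mulVec, ← Matrix.mul_assoc]
end

section
/- Suppose c ∈ ℂ^p is a vector such that (c* C D⁻¹)* = (C D⁻¹)* c lies in the column space of W. Then c* H = c* H̃, i.e., c* C D⁻¹ B = c* (C V) (W* D V)⁻¹ (W* B). -/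
open Matrix

/-- Theorem 2.1 (ii): if `(cᴴ C D⁻¹)ᴴ = (C D⁻¹)ᴴ c ∈ Col(W)`, then `cᴴ H = cᴴ H̃` where
`H = C D⁻¹ B` and `H̃ = (C V)(Wᴴ D V)⁻¹ (Wᴴ B)`. -/
theorem subspace_interpolation_left
    {n m p k : ℕ}
    (B : Matrix (Fin n) (Fin m) ℂ) (C : Matrix (Fin p) (Fin n) ℂ)
    (D : Matrix (Fin n) (Fin n) ℂ) (V W : Matrix (Fin n) (Fin k) ℂ)
    (hD : IsUnit D) (hWDV : IsUnit (Wᴴ * D * V))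
    (c : Fin p → ℂ)
    (hc : (C * D⁻¹)ᴴ.mulVec c ∈ LinearMap.range W.mulVecLin) :
    Matrix.vecMul (star c) (C * D⁻¹ * B) =
      Matrix.vecMul (star c) (C * V * (Wᴴ * D * V)⁻¹ * (Wᴴ * B)) := by
  obtain ⟨y, hy⟩ := hc
  simp only [mulVecLin_apply] at hy
  have key : Matrix.vecMul (star c) (C * D⁻¹) = Matrix.vecMul (star y) Wᴴ := by
    have := congrArg star hy
    rw [Matrix.star_mulVec, Matrix.star_mulVec, conjTranspose_conjTranspose] at this
    exact this.symm
  have hCV : C * V = C * D⁻¹ * (D * V) := by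
    rw [Matrix.mul_assoc C, ← Matrix.mul_assoc D⁻¹,
      Matrix.nonsing_inv_mul D ((Matrix.isUnit_iff_isUnit_det D).mp hD), Matrix.one_mul]
  have h1 : Matrix.vecMul (star c) (C * V) = Matrix.vecMul (star y) (Wᴴ * D * V) := by
    rw [hCV, ← Matrix.vecMul_vecMul, key, Matrix.vecMul_vecMul, Matrix.mul_assoc]
  have h2 : Matrix.vecMul (star c) (C * V * (Wᴴ * D * V)⁻¹) = star y := by
    rw [← Matrix.vecMul_vecMul, h1, Matrix.vecMul_vecMul,
      Matrix.mul_nonsing_inv _ ((Matrix.isUnit_iff_isUnit_det _).mp hWDV), Matrix.vecMul_one]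
  calc Matrix.vecMul (star c) (C * D⁻¹ * B)
      = Matrix.vecMul (Matrix.vecMul (star c) (C * D⁻¹)) B := by
        rw [Matrix.vecMul_vecMul]
    _ = Matrix.vecMul (star y) (Wᴴ * B) := by rw [key, Matrix.vecMul_vecMul]
    _ = Matrix.vecMul (star c) (C * V * (Wᴴ * D * V)⁻¹ * (Wᴴ * B)) := by
        rw [← h2, Matrix.vecMul_vecMul]
end

section
/- Let b ∈ ℂ^m and c ∈ ℂ^p be vectors such that D(μ)⁻¹ B(μ) b lies in the column space of V and (c* C(μ) D(μ)⁻¹)* = (C(μ) D(μ)⁻¹)* c lies in the column space of W. Then the derivatives of H and H̃ at μ satisfy c* H′(μ) b = c* H̃′(μ) b. -/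
/-!
Both transfer functions have the form `s ↦ C s * X s * B s`: for `H` with `X s = (D s)⁻¹`, for
`H̃` with the Petrov–Galerkin compression `X s = V (Wᴴ D(s) V)⁻¹ Wᴴ`. In both cases
`X′(μ) = -X(μ) D′(μ) X(μ)`, so `c* (C X B)′(μ) b` only sees `X(μ)` through `X(μ) B(μ) b` and
`c* C(μ) X(μ)`. By the two hypotheses the compression agrees with `D(μ)⁻¹` on these two
vectors, because `V (Wᴴ E V)⁻¹ Wᴴ E` fixes `Col V` and `E V (Wᴴ E V)⁻¹ Wᴴ` fixes
the row space of `Wᴴ`.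
-/

open Matrix

attribute [local instance] Matrix.normedAddCommGroup Matrix.normedSpace

open Filter Topology

section Calculus

variable {𝕜 : Type*} [NontriviallyNormedField 𝕜] {l m n : Type*} [Fintype l] [Fintype m]
  [Fintype n] {x : 𝕜}

theorem HasDerivAt.matrix_mul [CompleteSpace 𝕜] {f : 𝕜 → Matrix l m 𝕜} {g : 𝕜 → Matrix m n 𝕜}
    {f' : Matrix l m 𝕜} {g' : Matrix m n 𝕜} (hf : HasDerivAt f f' x) (hg : HasDerivAt g g' x) :
    HasDerivAt (fun s => f s * g s) (f' * g x + f x * g') x := by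
  have h := (mulLinearMap (l := l) (m := m) (n := n) (A := 𝕜) 𝕜).toContinuousBilinearMap
    |>.hasDerivAt_of_bilinear (fun _ => hf) (fun _ => hg)
  rw [add_comm] at h
  exact h

theorem HasDerivAt.matrix_mul_mul [CompleteSpace 𝕜] {f : 𝕜 → Matrix l m 𝕜}
    {X : 𝕜 → Matrix m m 𝕜} {g : 𝕜 → Matrix m n 𝕜} {f' : Matrix l m 𝕜} {X' : Matrix m m 𝕜}
    {g' : Matrix m n 𝕜} (hf : HasDerivAt f f' x) (hX : HasDerivAt X X' x)
    (hg : HasDerivAt g g' x) :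
    HasDerivAt (fun s => f s * X s * g s)
      (f' * X x * g x + f x * X' * g x + f x * X x * g') x := by
  simpa only [Matrix.add_mul] using (hf.matrix_mul hX).matrix_mul hg

theorem HasDerivAt.matrix_inv [DecidableEq n] {A : 𝕜 → Matrix n n 𝕜} {A' : Matrix n n 𝕜}
    (hA : HasDerivAt A A' x) (hx : IsUnit (A x)) :
    HasDerivAt (fun s => (A s)⁻¹) (-((A x)⁻¹ * A' * (A x)⁻¹)) x := by
  have hdet : (A x).det ≠ 0 := ((isUnit_iff_isUnit_det _).1 hx).ne_zero
  have hinv : ContinuousAt (fun s => (A s)⁻¹) x := by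
    refine (continuousAt_matrix_inv _ ?_).comp hA.continuousAt
    simpa only [Ring.inverse_eq_inv'] using continuousAt_inv₀ hdet
  have hunit : ∀ᶠ s in 𝓝 x, IsUnit (A s) := by
    filter_upwards [(continuous_id.matrix_det.continuousAt.comp hA.continuousAt).eventually_ne
      hdet] with s hs
    exact (isUnit_iff_isUnit_det _).2 (isUnit_iff_ne_zero.2 hs)
  -- `slope A⁻¹ x s = -A(x)⁻¹ (slope A x s) A(s)⁻¹`, and `A(s)⁻¹ → A(x)⁻¹`
  refine hasDerivAt_iff_tendsto_slope.2 <|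
    (((tendsto_const_nhds (x := (A x)⁻¹)).mul (hasDerivAt_iff_tendsto_slope.1 hA)).mul
      (hinv.tendsto.mono_left nhdsWithin_le_nhds)).neg.congr' ?_
  filter_upwards [nhdsWithin_le_nhds hunit] with s hs
  rw [slope_def_module, slope_def_module, ← neg_sub (A x)⁻¹, inv_sub_inv (iff_of_true hx hs),
    Matrix.mul_smul, Matrix.smul_mul, smul_neg]

theorem HasDerivAt.matrix_compression [CompleteSpace 𝕜] [DecidableEq m] {A : 𝕜 → Matrix n n 𝕜}
    {A' : Matrix n n 𝕜} (hA : HasDerivAt A A' x) (L : Matrix m n 𝕜) (R : Matrix n m 𝕜)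
    (hx : IsUnit (L * A x * R)) :
    HasDerivAt (fun s => R * (L * A s * R)⁻¹ * L)
      (-(R * (L * A x * R)⁻¹ * L * A' * (R * (L * A x * R)⁻¹ * L))) x := by
  have hLAR : HasDerivAt (fun s => L * A s * R) (L * A' * R) x := by
    simpa using (hasDerivAt_const x L).matrix_mul_mul hA (hasDerivAt_const x R)
  simpa [Matrix.mul_assoc] using
    (hasDerivAt_const x R).matrix_mul_mul (hLAR.matrix_inv hx) (hasDerivAt_const x L)

end Calculus

section Algebra

variable {R : Type*} [CommRing R] {m n p : Type*} [Fintype m] [Fintype n] [Fintype p]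

/-- The left-hand side is `c (C X B)′ b` when `X′ = -X D′ X`, as for `X = D⁻¹`. -/
theorem dotProduct_sandwich_deriv_mulVec_eq {X Y D' : Matrix n n R} {C C' : Matrix p n R}
    {B B' : Matrix n m R} {c : p → R} {b : m → R}
    (hXb : X *ᵥ (B *ᵥ b) = Y *ᵥ (B *ᵥ b)) (hXc : c ᵥ* C ᵥ* X = c ᵥ* C ᵥ* Y) :
    c ⬝ᵥ ((C' * X * B + C * -(X * D' * X) * B + C * X * B') *ᵥ b) =
      c ⬝ᵥ ((C' * Y * B + C * -(Y * D' * Y) * B + C * Y * B') *ᵥ b) := by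
  simp only [add_mulVec, Matrix.mul_neg, Matrix.neg_mul, neg_mulVec, dotProduct_add,
    dotProduct_neg, ← mulVec_mulVec, hXb]
  simp only [dotProduct_mulVec c C, dotProduct_mulVec (c ᵥ* C) X, dotProduct_mulVec (c ᵥ* C) Y,
    hXc]

variable [DecidableEq n] [DecidableEq m] {E : Matrix n n R} {L : Matrix m n R} {V : Matrix n m R}

theorem compression_mulVec_eq_inv_mulVec (hE : IsUnit E) (hK : IsUnit (L * E * V))
    {u : n → R} {x : m → R} (hx : E⁻¹ *ᵥ u = V *ᵥ x) :
    (V * (L * E * V)⁻¹ * L) *ᵥ u = E⁻¹ *ᵥ u := by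
  have hV : V * (L * E * V)⁻¹ * L * E * V = V := by
    rw [Matrix.mul_assoc _ E, Matrix.mul_assoc _ L, ← Matrix.mul_assoc L,
      nonsing_inv_mul_cancel_right _ _ ((isUnit_iff_isUnit_det _).1 hK)]
  calc (V * (L * E * V)⁻¹ * L) *ᵥ u = (V * (L * E * V)⁻¹ * L * E) *ᵥ (E⁻¹ *ᵥ u) := by
        rw [mulVec_mulVec, mul_nonsing_inv_cancel_right _ _ ((isUnit_iff_isUnit_det _).1 hE)]
    _ = E⁻¹ *ᵥ u := by rw [hx, mulVec_mulVec, hV]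

theorem vecMul_compression_eq_vecMul_inv (hE : IsUnit E) (hK : IsUnit (L * E * V))
    {v : n → R} {y : m → R} (hy : v ᵥ* E⁻¹ = y ᵥ* L) :
    v ᵥ* (V * (L * E * V)⁻¹ * L) = v ᵥ* E⁻¹ := by
  have hL : L * (E * (V * (L * E * V)⁻¹ * L)) = L := by
    simp only [← Matrix.mul_assoc]
    rw [mul_nonsing_inv _ ((isUnit_iff_isUnit_det _).1 hK), Matrix.one_mul]
  calc v ᵥ* (V * (L * E * V)⁻¹ * L) = v ᵥ* E⁻¹ ᵥ* (E * (V * (L * E * V)⁻¹ * L)) := by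
        rw [vecMul_vecMul, nonsing_inv_mul_cancel_left _ _ ((isUnit_iff_isUnit_det _).1 hE)]
    _ = v ᵥ* E⁻¹ := by rw [hy, vecMul_vecMul, hL]

end Algebra

/-- Theorem 2.1 (iii): if `D(μ)⁻¹ B(μ) b ∈ Col(V)` and `(C(μ) D(μ)⁻¹)ᴴ c ∈ Col(W)`,
then `cᴴ H′(μ) b = cᴴ H̃′(μ) b`. -/
theorem subspace_hermite_interpolation
    {n m p k : ℕ} (μ : ℂ)
    (B : ℂ → Matrix (Fin n) (Fin m) ℂ) (C : ℂ → Matrix (Fin p) (Fin n) ℂ)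
    (D : ℂ → Matrix (Fin n) (Fin n) ℂ)
    (hB : DifferentiableAt ℂ B μ) (hC : DifferentiableAt ℂ C μ)
    (hD : DifferentiableAt ℂ D μ)
    (hDμ : IsUnit (D μ))
    (V W : Matrix (Fin n) (Fin k) ℂ)
    (hWDV : IsUnit (Wᴴ * D μ * V))
    (b : Fin m → ℂ) (c : Fin p → ℂ)
    (hb : ((D μ)⁻¹ * B μ).mulVec b ∈ LinearMap.range V.mulVecLin)
    (hc : (C μ * (D μ)⁻¹)ᴴ.mulVec c ∈ LinearMap.range W.mulVecLin) :
    star c ⬝ᵥ (deriv (fun s => C s * (D s)⁻¹ * B s) μ).mulVec b =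
      star c ⬝ᵥ (deriv (fun s => (C s * V) * (Wᴴ * D s * V)⁻¹ * (Wᴴ * B s)) μ).mulVec b := by
  obtain ⟨x, hx⟩ := hb
  obtain ⟨y, hy⟩ := hc
  rw [mulVecLin_apply] at hx hy
  have hreassoc : (fun s => C s * V * (Wᴴ * D s * V)⁻¹ * (Wᴴ * B s)) =
      fun s => C s * (V * (Wᴴ * D s * V)⁻¹ * Wᴴ) * B s := by
    funext s
    simp only [Matrix.mul_assoc]
  have hH : deriv (fun s => C s * (D s)⁻¹ * B s) μ = _ :=
    (hC.hasDerivAt.matrix_mul_mul (hD.hasDerivAt.matrix_inv hDμ) hB.hasDerivAt).deriv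
  have hH_red : deriv (fun s => C s * (V * (Wᴴ * D s * V)⁻¹ * Wᴴ) * B s) μ = _ :=
    (hC.hasDerivAt.matrix_mul_mul (hD.hasDerivAt.matrix_compression Wᴴ V hWDV)
      hB.hasDerivAt).deriv
  rw [hH, hreassoc, hH_red]
  refine dotProduct_sandwich_deriv_mulVec_eq ?_ ?_
  · refine (compression_mulVec_eq_inv_mulVec hDμ hWDV (x := x) ?_).symm
    rw [mulVec_mulVec, hx]
  · refine (vecMul_compression_eq_vecMul_inv hDμ hWDV (y := star y) ?_).symm
    have hy_row := congrArg star hy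
    rw [star_mulVec, star_mulVec, conjTranspose_conjTranspose] at hy_row
    rw [vecMul_vecMul, hy_row]
end

section
/- Suppose every column of the matrix D⁻¹ B lies in the column space of V (equivalently, Col(D⁻¹ B) ⊆ Col(V)). Then H = H̃, i.e., C D⁻¹ B = (C V)(W* D V)⁻¹(W* B). -/
open Matrix

/-- If `Col(D⁻¹ B) ⊆ Col(V)`, then `H = H̃`, i.e.
`C D⁻¹ B = (C V)(Wᴴ D V)⁻¹ (Wᴴ B)`. -/
theorem subspace_full_interpolation_right
    {n m p k : ℕ}
    (B : Matrix (Fin n) (Fin m) ℂ) (C : Matrix (Fin p) (Fin n) ℂ)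
    (D : Matrix (Fin n) (Fin n) ℂ) (V W : Matrix (Fin n) (Fin k) ℂ)
    (hD : IsUnit D) (hWDV : IsUnit (Wᴴ * D * V))
    (hcol : LinearMap.range (D⁻¹ * B).mulVecLin ≤ LinearMap.range V.mulVecLin) :
    C * D⁻¹ * B = C * V * (Wᴴ * D * V)⁻¹ * (Wᴴ * B) := by
  have hA : ∀ j, ∃ x, V *ᵥ x = (D⁻¹ * B) *ᵥ Pi.single j 1 :=
    fun j => hcol ⟨Pi.single j 1, rfl⟩
  choose x hx using hA
  set X : Matrix (Fin k) (Fin m) ℂ := Matrix.of fun i j => x j i with hX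
  have hVX : V * X = D⁻¹ * B := by
    ext i j
    have h := congrFun (hx j) i
    simp only [mulVec_single, mul_one] at h
    simpa [Matrix.mul_apply, Matrix.mulVec, dotProduct, hX] using h
  have hdet : IsUnit D.det := (Matrix.isUnit_iff_isUnit_det D).mp hD
  have h2 : Wᴴ * D * V * X = Wᴴ * B := by
    rw [Matrix.mul_assoc (Wᴴ * D) V X, hVX, Matrix.mul_assoc,
      ← Matrix.mul_assoc D, Matrix.mul_nonsing_inv D hdet, Matrix.one_mul]
  have hX2 : X = (Wᴴ * D * V)⁻¹ * (Wᴴ * B) := by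
    rw [← h2, ← Matrix.mul_assoc, Matrix.nonsing_inv_mul _
      ((Matrix.isUnit_iff_isUnit_det _).mp hWDV), Matrix.one_mul]
  rw [Matrix.mul_assoc C D⁻¹ B, ← hVX, ← Matrix.mul_assoc, Matrix.mul_assoc (C * V),
    ← hX2]
end

section
/- Suppose every column of the matrix (C D⁻¹)* lies in the column space of W (equivalently, Col((C D⁻¹)*) ⊆ Col(W)). Then H = H̃, i.e., C D⁻¹ B = (C V)(W* D V)⁻¹(W* B). -/
open Matrix

/-- If `Col((C D⁻¹)ᴴ) ⊆ Col(W)`, then `H = H̃`, i.e.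
`C D⁻¹ B = (C V)(Wᴴ D V)⁻¹ (Wᴴ B)`. -/
theorem subspace_full_interpolation_left
    {n m p k : ℕ}
    (B : Matrix (Fin n) (Fin m) ℂ) (C : Matrix (Fin p) (Fin n) ℂ)
    (D : Matrix (Fin n) (Fin n) ℂ) (V W : Matrix (Fin n) (Fin k) ℂ)
    (hD : IsUnit D) (hWDV : IsUnit (Wᴴ * D * V))
    (hcol : LinearMap.range ((C * D⁻¹)ᴴ).mulVecLin ≤ LinearMap.range W.mulVecLin) :
    C * D⁻¹ * B = C * V * (Wᴴ * D * V)⁻¹ * (Wᴴ * B) := by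
  -- construct X with (C * D⁻¹)ᴴ = W * X
  have hX : ∀ j : Fin p, ∃ u : Fin k → ℂ,
      W.mulVec u = ((C * D⁻¹)ᴴ).mulVec (Pi.single j 1) := by
    intro j
    have := hcol ⟨Pi.single j 1, rfl⟩
    obtain ⟨u, hu⟩ := this
    exact ⟨u, hu⟩
  choose X hXspec using hX
  set Y : Matrix (Fin k) (Fin p) ℂ := Matrix.of (fun i j => X j i) with hY
  have hWY : W * Y = (C * D⁻¹)ᴴ := by
    ext a j
    have := congrFun (hXspec j) a
    simp only [Matrix.mulVec, dotProduct, Pi.single_apply, mul_ite, mul_one,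
      mul_zero, Finset.sum_ite_eq', Finset.mem_univ, if_true] at this
    simpa [Matrix.mul_apply, hY] using this
  have hCD : C * D⁻¹ = Yᴴ * Wᴴ := by
    have := congrArg Matrix.conjTranspose hWY
    simpa [Matrix.conjTranspose_mul] using this.symm
  have hDdet : IsUnit D.det := (Matrix.isUnit_iff_isUnit_det D).mp hD
  have hCV : C * V = Yᴴ * (Wᴴ * D * V) := by
    calc C * V = C * D⁻¹ * (D * V) := by
          rw [Matrix.mul_assoc, ← Matrix.mul_assoc D⁻¹,
            Matrix.nonsing_inv_mul D hDdet, Matrix.one_mul]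
      _ = Yᴴ * (Wᴴ * D * V) := by rw [hCD]; rw [Matrix.mul_assoc, Matrix.mul_assoc]
  have hWDVdet : IsUnit (Wᴴ * D * V).det := (Matrix.isUnit_iff_isUnit_det _).mp hWDV
  rw [hCV, hCD, Matrix.mul_assoc (Yᴴ) (Wᴴ * D * V) ((Wᴴ * D * V)⁻¹),
    Matrix.mul_nonsing_inv _ hWDVdet, Matrix.mul_one, Matrix.mul_assoc]
end

section
/- Let v ∈ ℂ^m be a unit vector attaining the spectral norm of H, i.e., ‖v‖ = 1 and ‖H v‖ = ‖H‖. If D⁻¹ B v lies in the column space of V, then ‖H‖ ≤ ‖H̃‖, where ‖·‖ denotes the spectral (ℓ² → ℓ² operator) norm, i.e., the largest singular value of the matrix. -/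
open Matrix

/-- The spectral (ℓ² → ℓ² operator) norm of a complex matrix, i.e. its largest
singular value. -/
noncomputable def specNorm {a b : ℕ} (M : Matrix (Fin a) (Fin b) ℂ) : ℝ :=
  ‖LinearMap.toContinuousLinearMap (Matrix.toEuclideanLin M)‖

/-- The Euclidean (ℓ²) norm of a complex vector. -/
noncomputable def euclNorm {a : ℕ} (v : Fin a → ℂ) : ℝ :=
  ‖(EuclideanSpace.equiv (Fin a) ℂ).symm v‖

lemma euclNorm_mulVec_le {a b : ℕ} (M : Matrix (Fin a) (Fin b) ℂ) (v : Fin b → ℂ) :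
    euclNorm (M.mulVec v) ≤ specNorm M * euclNorm v := by
  have h := (LinearMap.toContinuousLinearMap (Matrix.toEuclideanLin M)).le_opNorm
    ((EuclideanSpace.equiv (Fin b) ℂ).symm v)
  simpa [euclNorm, specNorm, Matrix.toEuclideanLin, mulVec] using h

/-- If a unit vector `v` attaining the spectral norm of `H = C D⁻¹ B` satisfies
`D⁻¹ B v ∈ Col(V)`, then `‖H‖ ≤ ‖H̃‖` for `H̃ = (C V)(Wᴴ D V)⁻¹ (Wᴴ B)`. -/
theorem specNorm_le_of_attaining_vector_in_colspace
    {n m p k : ℕ}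
    (B : Matrix (Fin n) (Fin m) ℂ) (C : Matrix (Fin p) (Fin n) ℂ)
    (D : Matrix (Fin n) (Fin n) ℂ) (V W : Matrix (Fin n) (Fin k) ℂ)
    (hD : IsUnit D) (hWDV : IsUnit (Wᴴ * D * V))
    (v : Fin m → ℂ) (hv1 : euclNorm v = 1)
    (hattain : euclNorm ((C * D⁻¹ * B).mulVec v) = specNorm (C * D⁻¹ * B))
    (hcol : (D⁻¹ * B).mulVec v ∈ LinearMap.range V.mulVecLin) :
    specNorm (C * D⁻¹ * B) ≤ specNorm (C * V * (Wᴴ * D * V)⁻¹ * (Wᴴ * B)) := by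
  obtain ⟨y, hy⟩ := hcol
  simp only [mulVecLin_apply] at hy
  have hDinv : D * D⁻¹ = 1 := mul_nonsing_inv D ((isUnit_iff_isUnit_det D).mp hD)
  have hWDVinv : C * V * (Wᴴ * D * V)⁻¹ * (Wᴴ * D * V) = C * V := by
    rw [Matrix.mul_assoc (C * V), nonsing_inv_mul _ ((isUnit_iff_isUnit_det _).mp hWDV),
      Matrix.mul_one]
  have h0 : B.mulVec v = D.mulVec (V.mulVec y) := by
    rw [hy, mulVec_mulVec, ← Matrix.mul_assoc, hDinv, Matrix.one_mul]
  have h1 : (Wᴴ * B).mulVec v = (Wᴴ * D * V).mulVec y := by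
    rw [← mulVec_mulVec, h0, mulVec_mulVec, mulVec_mulVec]
  have key : (C * V * (Wᴴ * D * V)⁻¹ * (Wᴴ * B)).mulVec v = (C * D⁻¹ * B).mulVec v := by
    rw [← mulVec_mulVec, h1, mulVec_mulVec, hWDVinv, ← mulVec_mulVec, hy, mulVec_mulVec,
      ← Matrix.mul_assoc]
  calc specNorm (C * D⁻¹ * B) = euclNorm ((C * V * (Wᴴ * D * V)⁻¹ * (Wᴴ * B)).mulVec v) := by
        rw [key, hattain]
    _ ≤ specNorm (C * V * (Wᴴ * D * V)⁻¹ * (Wᴴ * B)) * euclNorm v := euclNorm_mulVec_le _ _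
    _ = _ := by rw [hv1, mul_one]
end

section
/- Let I ⊆ ℝ be an interval containing ω*, ω_r, and ω_{r+1}. Let f : ℝ → ℝ be twice differentiable on I with f′(ω*) = 0, with f″ Lipschitz continuous on I with constant γ, and |f″(ω_r)| ≥ ℓ₁ > 0. Let g : ℝ → ℝ be three times differentiable on I with |g‴(ω)| ≤ γ₁ for all ω ∈ I and |g″(ω_r)| ≥ ℓ₂ > 0. Suppose f′(ω_r) = g′(ω_r) and g′(ω_{r+1}) = 0. Then |ω* − ω_{r+1}| ≤ (|g″(ω_r) − f″(ω_r)|/(ℓ₁·ℓ₂))·|f′(ω_r)| + (γ₁/(2·ℓ₂))·|ω_{r+1} − ω_r|² + (γ/(2·ℓ₁))·|ω* − ω_r|². -/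
/-!
Both `ω⋆` and `ω_{r+1}` lie within a quadratic error of a Newton step from `ω_r`: `ω⋆` of the
step for `f′`, `ω_{r+1}` of the step for `g′`, the error coming from the Taylor remainder of the
first derivative, which a Lipschitz second derivative bounds by `L/2 · |x - ω_r|²`. By the Hermite
property the two steps share the numerator `f′(ω_r)` and differ only in the denominators
`f″(ω_r)`, `g″(ω_r)`, which gives the first term.
-/

open Set

lemma Convex.abs_sub_sub_mul_le_of_lipschitz_deriv {s : Set ℝ} (hs : Convex ℝ s)
    {h h' : ℝ → ℝ} {K : ℝ} (hd : ∀ x ∈ s, HasDerivAt h (h' x) x)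
    (hK : ∀ x ∈ s, ∀ y ∈ s, |h' x - h' y| ≤ K * |x - y|) {a b : ℝ} (ha : a ∈ s) (hb : b ∈ s) :
    |h b - h a - h' a * (b - a)| ≤ K / 2 * |b - a| ^ 2 := by
  set d := b - a
  have hseg : ∀ t ∈ Icc (0 : ℝ) 1, a + t * d ∈ s := fun t ht => hs.add_smul_sub_mem ha hb ht
  have hφ : ∀ t ∈ Icc (0 : ℝ) 1, HasDerivAt (fun t => h (a + t * d) - h a - t * (h' a * d))
      ((h' (a + t * d) - h' a) * d) t := by
    intro t ht
    have hline : HasDerivAt (fun t : ℝ => a + t * d) d t := by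
      simpa using ((hasDerivAt_id t).mul_const d).const_add a
    exact ((((hd _ (hseg t ht)).comp t hline).sub_const (h a)).sub
      ((hasDerivAt_id t).mul_const (h' a * d))).congr_deriv (by ring)
  have hbound : ∀ t ∈ Ico (0 : ℝ) 1, ‖(h' (a + t * d) - h' a) * d‖ ≤ K * d ^ 2 * t := by
    intro t ht
    calc ‖(h' (a + t * d) - h' a) * d‖ = |h' (a + t * d) - h' a| * |d| := by
          rw [Real.norm_eq_abs, abs_mul]
      _ ≤ K * |a + t * d - a| * |d| := by
          gcongr; exact hK _ (hseg t (Ico_subset_Icc_self ht)) a ha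
      _ = K * d ^ 2 * t := by
          rw [add_sub_cancel_left, abs_mul, abs_of_nonneg ht.1, ← sq_abs d]; ring
  -- Fencing: the remainder along the segment starts at `0` and grows slower than `K d² t² / 2`.
  have key := image_norm_le_of_norm_deriv_right_le_deriv_boundary'
    (fun t ht => (hφ t ht).continuousAt.continuousWithinAt)
    (fun t ht => (hφ t (Ico_subset_Icc_self ht)).hasDerivWithinAt)
    (B := fun t => K * d ^ 2 / 2 * t ^ 2) (B' := fun t => K * d ^ 2 * t)
    (by simp) (by fun_prop)
    (fun t _ => (((hasDerivAt_pow 2 t).const_mul (K * d ^ 2 / 2)).congr_deriv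
      (by norm_num; ring)).hasDerivWithinAt)
    hbound (right_mem_Icc.2 zero_le_one)
  simpa [d, sq_abs, div_mul_eq_mul_div] using key

noncomputable def newtonStep (φ φ' : ℝ → ℝ) (x : ℝ) : ℝ := x - φ x / φ' x

lemma Convex.abs_sub_newtonStep_le {s : Set ℝ} (hs : Convex ℝ s) {φ φ' : ℝ → ℝ} {K ℓ : ℝ}
    (hd : ∀ x ∈ s, HasDerivAt φ (φ' x) x)
    (hK : ∀ x ∈ s, ∀ y ∈ s, |φ' x - φ' y| ≤ K * |x - y|) {z r : ℝ} (hz : z ∈ s) (hr : r ∈ s)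
    (hφz : φ z = 0) (hℓ : 0 < ℓ) (hℓr : ℓ ≤ |φ' r|) :
    |z - newtonStep φ φ' r| ≤ K / (2 * ℓ) * |z - r| ^ 2 := by
  have taylor := hs.abs_sub_sub_mul_le_of_lipschitz_deriv hd hK hr hz
  have hφ'r : φ' r ≠ 0 := abs_pos.1 (hℓ.trans_le hℓr)
  have herr : z - newtonStep φ φ' r = -(φ z - φ r - φ' r * (z - r)) / φ' r := by
    rw [newtonStep, hφz]; field_simp; ring
  calc |z - newtonStep φ φ' r| = |φ z - φ r - φ' r * (z - r)| / |φ' r| := by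
        rw [herr, abs_div, abs_neg]
    _ ≤ K / 2 * |z - r| ^ 2 / ℓ := div_le_div₀ ((abs_nonneg _).trans taylor) taylor hℓ hℓr
    _ = K / (2 * ℓ) * |z - r| ^ 2 := by ring

lemma abs_newtonStep_sub_newtonStep_le {φ φ' ψ ψ' : ℝ → ℝ} {r ℓ₁ ℓ₂ : ℝ} (hφψ : φ r = ψ r)
    (hℓ₁ : 0 < ℓ₁) (hφ' : ℓ₁ ≤ |φ' r|) (hℓ₂ : 0 < ℓ₂) (hψ' : ℓ₂ ≤ |ψ' r|) :
    |newtonStep φ φ' r - newtonStep ψ ψ' r| ≤ |ψ' r - φ' r| / (ℓ₁ * ℓ₂) * |φ r| := by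
  have hφ'r : φ' r ≠ 0 := abs_pos.1 (hℓ₁.trans_le hφ')
  have hψ'r : ψ' r ≠ 0 := abs_pos.1 (hℓ₂.trans_le hψ')
  have hdiff : newtonStep φ φ' r - newtonStep ψ ψ' r = φ r * (φ' r - ψ' r) / (φ' r * ψ' r) := by
    rw [newtonStep, newtonStep, ← hφψ]; field_simp; ring
  calc |newtonStep φ φ' r - newtonStep ψ ψ' r| = |φ r| * |ψ' r - φ' r| / (|φ' r| * |ψ' r|) := by
        rw [hdiff, abs_div, abs_mul, abs_mul, abs_sub_comm]
    _ ≤ |φ r| * |ψ' r - φ' r| / (ℓ₁ * ℓ₂) := by gcongr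
    _ = |ψ' r - φ' r| / (ℓ₁ * ℓ₂) * |φ r| := by ring

theorem key_error_estimate_general
    (I : Set ℝ) (hI : Convex ℝ I)
    (ωs ωr ωr1 : ℝ) (hωs : ωs ∈ I) (hωr : ωr ∈ I) (hωr1 : ωr1 ∈ I)
    (f' f'' g' g'' g''' : ℝ → ℝ) (γ γ₁ ℓ₁ ℓ₂ : ℝ)
    (hf'' : ∀ x ∈ I, HasDerivAt f' (f'' x) x)
    (hfs : f' ωs = 0)
    (hLipf : ∀ x ∈ I, ∀ y ∈ I, |f'' x - f'' y| ≤ γ * |x - y|)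
    (hl1 : 0 < ℓ₁) (hf''r : ℓ₁ ≤ |f'' ωr|)
    (hg'' : ∀ x ∈ I, HasDerivAt g' (g'' x) x)
    (hg''' : ∀ x ∈ I, HasDerivAt g'' (g''' x) x)
    (hg3 : ∀ x ∈ I, |g''' x| ≤ γ₁)
    (hl2 : 0 < ℓ₂) (hg''r : ℓ₂ ≤ |g'' ωr|)
    (hinterp : f' ωr = g' ωr) (hopt : g' ωr1 = 0) :
    |ωs - ωr1| ≤ (|g'' ωr - f'' ωr| / (ℓ₁ * ℓ₂)) * |f' ωr|
      + (γ₁ / (2 * ℓ₂)) * |ωr1 - ωr| ^ 2 + (γ / (2 * ℓ₁)) * |ωs - ωr| ^ 2 := by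
  have hLipg : ∀ x ∈ I, ∀ y ∈ I, |g'' x - g'' y| ≤ γ₁ * |x - y| := fun x hx y hy =>
    hI.norm_image_sub_le_of_norm_hasDerivWithin_le (fun z hz => (hg''' z hz).hasDerivWithinAt)
      hg3 hy hx
  have hf := hI.abs_sub_newtonStep_le hf'' hLipf hωs hωr hfs hl1 hf''r
  have hg := hI.abs_sub_newtonStep_le hg'' hLipg hωr1 hωr hopt hl2 hg''r
  have hfg := abs_newtonStep_sub_newtonStep_le hinterp hl1 hf''r hl2 hg''r
  calc |ωs - ωr1| ≤ |ωs - newtonStep f' f'' ωr| + |newtonStep f' f'' ωr - ωr1| :=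
        abs_sub_le _ _ _
    _ ≤ |ωs - newtonStep f' f'' ωr| + (|newtonStep f' f'' ωr - newtonStep g' g'' ωr|
        + |ωr1 - newtonStep g' g'' ωr|) := by
        rw [abs_sub_comm ωr1]; gcongr; exact abs_sub_le _ _ _
    _ ≤ _ := by linarith

/-- Key error estimate (3.10) in the superlinear convergence proof: with
`f′(ω⋆) = 0`, `f″` γ-Lipschitz and `|f″(ω_r)| ≥ ℓ₁ > 0`, `|g‴| ≤ γ₁` and
`|g″(ω_r)| ≥ ℓ₂ > 0`, the Hermite condition `f′(ω_r) = g′(ω_r)` and the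
stationarity `g′(ω_{r+1}) = 0`, one has
`|ω⋆ − ω_{r+1}| ≤ (|g″(ω_r) − f″(ω_r)|/(ℓ₁ℓ₂))·|f′(ω_r)| +
(γ₁/(2ℓ₂))·|ω_{r+1} − ω_r|² + (γ/(2ℓ₁))·|ω⋆ − ω_r|²`. -/
theorem key_error_estimate
    (I : Set ℝ) (hI : Convex ℝ I)
    (ωs ωr ωr1 : ℝ) (hωs : ωs ∈ I) (hωr : ωr ∈ I) (hωr1 : ωr1 ∈ I)
    (f f' f'' g g' g'' g''' : ℝ → ℝ) (γ γ₁ ℓ₁ ℓ₂ : ℝ)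
    (hf' : ∀ x ∈ I, HasDerivAt f (f' x) x)
    (hf'' : ∀ x ∈ I, HasDerivAt f' (f'' x) x)
    (hfs : f' ωs = 0)
    (hLipf : ∀ x ∈ I, ∀ y ∈ I, |f'' x - f'' y| ≤ γ * |x - y|)
    (hl1 : 0 < ℓ₁) (hf''r : ℓ₁ ≤ |f'' ωr|)
    (hg' : ∀ x ∈ I, HasDerivAt g (g' x) x)
    (hg'' : ∀ x ∈ I, HasDerivAt g' (g'' x) x)
    (hg''' : ∀ x ∈ I, HasDerivAt g'' (g''' x) x)
    (hg3 : ∀ x ∈ I, |g''' x| ≤ γ₁)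
    (hl2 : 0 < ℓ₂) (hg''r : ℓ₂ ≤ |g'' ωr|)
    (hinterp : f' ωr = g' ωr) (hopt : g' ωr1 = 0) :
    |ωs - ωr1| ≤ (|g'' ωr - f'' ωr| / (ℓ₁ * ℓ₂)) * |f' ωr|
      + (γ₁ / (2 * ℓ₂)) * |ωr1 - ωr| ^ 2 + (γ / (2 * ℓ₁)) * |ωs - ωr| ^ 2 :=
  key_error_estimate_general I hI ωs ωr ωr1 hωs hωr hωr1 f' f'' g' g'' g''' γ γ₁ ℓ₁ ℓ₂ hf'' hfs
    hLipf hl1 hf''r hg'' hg''' hg3 hl2 hg''r hinterp hopt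
end

section
/- Let I ⊆ ℝ be an interval containing ω*, ω_{r−1}, ω_r, and ω_{r+1}. Let f : ℝ → ℝ be twice differentiable on I with f′(ω*) = 0, f″ Lipschitz on I with constant γ, |f″(ω_r)| ≥ ℓ₁ > 0, and |f″(ω)| ≤ M for all ω ∈ I. Let g : ℝ → ℝ be three times differentiable on I with |g‴| ≤ γ₁ on I and |g″(ω_r)| ≥ ℓ₂ > 0, and suppose f′(ω_r) = g′(ω_r), g′(ω_{r+1}) = 0, and |g″(ω_r) − f″(ω_r)| ≤ μ·max{|ω_r − ω*|, |ω_{r−1} − ω*|}. Set δ := max{|ω_{r+1} − ω*|, |ω_r − ω*|, |ω_{r−1} − ω*|} and assume 1 − (γ₁/ℓ₂)·δ ≥ c₄ for some c₄ > 0. Then |ω_{r+1} − ω*| ≤ ν·|ω_r − ω*|·max{|ω_{r−1} − ω*|, |ω_r − ω*|}, where ν := (μ·M/(ℓ₁·ℓ₂) + γ/(2·ℓ₁) + γ₁/ℓ₂)/c₄. -/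
/-! Write `a = f''(ω_r)`, `b = g''(ω_r)`. Because `f'(ω⋆) = 0`, `g'(ω_{r+1}) = 0` and
`f'(ω_r) = g'(ω_r)`, the first-order Taylor remainders `R_f` of `f'` (from `ω_r` to `ω⋆`) and
`R_g` of `g'` (from `ω_r` to `ω_{r+1}`) give the exact error representation
`ω_{r+1} − ω⋆ = f'(ω_r)(b − a)/(ab) − R_g/b + R_f/a`.
The mean value theorem bounds `|f'(ω_r)|` by `M|ω_r − ω⋆|`, and the Lipschitz bounds on `f''` and
`g''` make both remainders quadratic. The only contribution that is not a product of
`|ω_r − ω⋆|` with `max{|ω_r − ω⋆|, |ω_{r−1} − ω⋆|}` is `(γ₁/ℓ₂)·δ·|ω_{r+1} − ω⋆|`, and it is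
absorbed into the left-hand side using `1 − (γ₁/ℓ₂)δ ≥ c₄`. -/

open Set

theorem abs_sub_le_of_abs_deriv_le {I : Set ℝ} (hI : Convex ℝ I) {φ φ' : ℝ → ℝ} {C : ℝ}
    (hφ : ∀ x ∈ I, HasDerivAt φ (φ' x) x) (hC : ∀ x ∈ I, |φ' x| ≤ C)
    {x y : ℝ} (hx : x ∈ I) (hy : y ∈ I) : |φ y - φ x| ≤ C * |y - x| :=
  hI.norm_image_sub_le_of_norm_hasDerivWithin_le (fun z hz => (hφ z hz).hasDerivWithinAt) hC hx hy

theorem abs_sub_sub_mul_le_of_abs_deriv_sub_le {I : Set ℝ} (hI : Convex ℝ I)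
    {φ φ' : ℝ → ℝ} {K a b : ℝ} (hφ : ∀ x ∈ I, HasDerivAt φ (φ' x) x) (ha : a ∈ I) (hb : b ∈ I)
    (hK : ∀ x ∈ I, |φ' x - φ' a| ≤ K * |x - a|) :
    |φ b - φ a - φ' a * (b - a)| ≤ K / 2 * (b - a) ^ 2 := by
  have hseg : ∀ t ∈ Icc (0 : ℝ) 1, a + t * (b - a) ∈ I := fun t ht => by
    simpa [smul_eq_mul] using hI.add_smul_sub_mem ha hb ht
  have hF : ∀ t ∈ Icc (0 : ℝ) 1, HasDerivAt
      (fun t => φ (a + t * (b - a)) - φ a - φ' a * (t * (b - a)))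
      ((φ' (a + t * (b - a)) - φ' a) * (b - a)) t := fun t ht => by
    have hlin : HasDerivAt (fun t : ℝ => t * (b - a)) (b - a) t := by
      simpa using (hasDerivAt_id t).mul_const (b - a)
    have := (((hφ _ (hseg t ht)).comp t (hlin.const_add a)).sub_const (φ a)).sub
      (hlin.const_mul (φ' a))
    exact this.congr_deriv (by ring)
  have hB : ∀ t, HasDerivAt (fun t => K / 2 * (b - a) ^ 2 * t ^ 2) (K * (b - a) ^ 2 * t) t :=
    fun t => ((hasDerivAt_pow 2 t).const_mul _).congr_deriv (by ring)
  have := image_norm_le_of_norm_deriv_right_le_deriv_boundary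
    (fun t ht => (hF t ht).continuousAt.continuousWithinAt)
    (fun t ht => (hF t (Ico_subset_Icc_self ht)).hasDerivWithinAt) (by simp) hB
    (fun t ht => by
      have := hK _ (hseg t (Ico_subset_Icc_self ht))
      rw [add_sub_cancel_left, abs_mul, abs_of_nonneg ht.1] at this
      rw [Real.norm_eq_abs, abs_mul]
      calc |φ' (a + t * (b - a)) - φ' a| * |b - a| ≤ K * (t * |b - a|) * |b - a| := by gcongr
        _ = K * (b - a) ^ 2 * t := by rw [← sq_abs (b - a)]; ring)
    (right_mem_Icc.2 zero_le_one)
  simpa using this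

theorem abs_sub_le_of_hermite_interpolation {f' f'' g' g'' : ℝ → ℝ}
    {ωs ωr ωr1 ℓ₁ ℓ₂ P E ρ₁ ρ₂ : ℝ}
    (hfs : f' ωs = 0) (hinterp : f' ωr = g' ωr) (hopt : g' ωr1 = 0)
    (hℓ₁ : 0 < ℓ₁) (hf'' : ℓ₁ ≤ |f'' ωr|) (hℓ₂ : 0 < ℓ₂) (hg'' : ℓ₂ ≤ |g'' ωr|)
    (hP : |f' ωr| ≤ P) (hE : |g'' ωr - f'' ωr| ≤ E)
    (hρ₁ : |g' ωr1 - g' ωr - g'' ωr * (ωr1 - ωr)| ≤ ρ₁)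
    (hρ₂ : |f' ωs - f' ωr - f'' ωr * (ωs - ωr)| ≤ ρ₂) :
    |ωr1 - ωs| ≤ P * E / (ℓ₁ * ℓ₂) + ρ₁ / ℓ₂ + ρ₂ / ℓ₁ := by
  have ha : f'' ωr ≠ 0 := abs_pos.1 (hℓ₁.trans_le hf'')
  have hb : g'' ωr ≠ 0 := abs_pos.1 (hℓ₂.trans_le hg'')
  have hid : ωr1 - ωs = f' ωr * (g'' ωr - f'' ωr) / (f'' ωr * g'' ωr)
      - (g' ωr1 - g' ωr - g'' ωr * (ωr1 - ωr)) / g'' ωr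
      + (f' ωs - f' ωr - f'' ωr * (ωs - ωr)) / f'' ωr := by
    rw [hfs, hopt, hinterp]; field_simp; ring
  have hP₀ : 0 ≤ P := (abs_nonneg _).trans hP
  have hE₀ : 0 ≤ E := (abs_nonneg _).trans hE
  have hρ₁₀ : 0 ≤ ρ₁ := (abs_nonneg _).trans hρ₁
  have hρ₂₀ : 0 ≤ ρ₂ := (abs_nonneg _).trans hρ₂
  calc |ωr1 - ωs|
      ≤ |f' ωr| * |g'' ωr - f'' ωr| / (|f'' ωr| * |g'' ωr|)
        + |g' ωr1 - g' ωr - g'' ωr * (ωr1 - ωr)| / |g'' ωr|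
        + |f' ωs - f' ωr - f'' ωr * (ωs - ωr)| / |f'' ωr| := by
        rw [hid]
        refine (abs_add_le _ _).trans (add_le_add (abs_sub _ _) le_rfl) |>.trans ?_
        simp only [abs_div, abs_mul, le_refl]
    _ ≤ P * E / (ℓ₁ * ℓ₂) + ρ₁ / ℓ₂ + ρ₂ / ℓ₁ := by gcongr

theorem sq_sub_le_two_mul_max {x y z m : ℝ} (hm : |y - z| ≤ m) :
    (x - y) ^ 2 ≤ 2 * (max |x - z| m * |x - z| + m * |y - z|) := by
  have hsq : (x - y) ^ 2 ≤ 2 * (|x - z| ^ 2 + |y - z| ^ 2) := by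
    simp only [sq_abs]
    linear_combination add_sq_le (a := x - z) (b := z - y)
  have hx : |x - z| ^ 2 ≤ max |x - z| m * |x - z| := by
    rw [sq]; exact mul_le_mul_of_nonneg_right (le_max_left _ _) (abs_nonneg _)
  have hy : |y - z| ^ 2 ≤ m * |y - z| := by
    rw [sq]; exact mul_le_mul_of_nonneg_right hm (abs_nonneg _)
  linarith

theorem le_div_of_le_add_mul_self {e A κ c : ℝ} (hc : 0 < c) (he : 0 ≤ e) (hκ : c ≤ 1 - κ)
    (h : e ≤ A + κ * e) : e ≤ A / c := by
  rw [le_div_iff₀ hc]; nlinarith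

theorem local_superlinear_convergence_general
    (I : Set ℝ) (hI : Convex ℝ I)
    (ωs ωrm1 ωr ωr1 : ℝ) (hωs : ωs ∈ I) (hωr : ωr ∈ I)
    (hωr1 : ωr1 ∈ I)
    (f' f'' g' g'' g''' : ℝ → ℝ) (γ γ₁ ℓ₁ ℓ₂ M μ c₄ : ℝ)
    (hf'' : ∀ x ∈ I, HasDerivAt f' (f'' x) x)
    (hfs : f' ωs = 0)
    (hLipf : ∀ x ∈ I, ∀ y ∈ I, |f'' x - f'' y| ≤ γ * |x - y|)
    (hl1 : 0 < ℓ₁) (hf''r : ℓ₁ ≤ |f'' ωr|)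
    (hfM : ∀ x ∈ I, |f'' x| ≤ M)
    (hg'' : ∀ x ∈ I, HasDerivAt g' (g'' x) x)
    (hg''' : ∀ x ∈ I, HasDerivAt g'' (g''' x) x)
    (hg3 : ∀ x ∈ I, |g''' x| ≤ γ₁)
    (hl2 : 0 < ℓ₂) (hg''r : ℓ₂ ≤ |g'' ωr|)
    (hinterp : f' ωr = g' ωr) (hopt : g' ωr1 = 0)
    (hacc : |g'' ωr - f'' ωr| ≤ μ * max |ωr - ωs| |ωrm1 - ωs|)
    (hc₄ : 0 < c₄)
    (hδ : 1 - (γ₁ / ℓ₂) * max |ωr1 - ωs| (max |ωr - ωs| |ωrm1 - ωs|) ≥ c₄) :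
    |ωr1 - ωs| ≤
      ((μ * M / (ℓ₁ * ℓ₂) + γ / (2 * ℓ₁) + γ₁ / ℓ₂) / c₄) *
        |ωr - ωs| * max |ωrm1 - ωs| |ωr - ωs| := by
  rw [max_comm |ωrm1 - ωs|, mul_assoc, div_mul_eq_mul_div]
  set d := |ωr - ωs|
  set e := |ωr1 - ωs|
  set m := max d |ωrm1 - ωs|
  have hdm : d ≤ m := le_max_left _ _
  have hγ₁ : 0 ≤ γ₁ := (abs_nonneg _).trans (hg3 ωr hωr)
  have hγd : 0 ≤ γ * d := (abs_nonneg _).trans (hLipf ωr hωr ωs hωs)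
  have hP : |f' ωr| ≤ M * d := by
    simpa [hfs] using abs_sub_le_of_abs_deriv_le hI hf'' hfM hωs hωr
  have hρ₁ : |g' ωr1 - g' ωr - g'' ωr * (ωr1 - ωr)| ≤ γ₁ * (max e m * e + m * d) := by
    refine (abs_sub_sub_mul_le_of_abs_deriv_sub_le hI hg'' hωr hωr1
      fun x hx => abs_sub_le_of_abs_deriv_le hI hg''' hg3 hωr hx).trans ?_
    linarith [mul_le_mul_of_nonneg_left (sq_sub_le_two_mul_max (x := ωr1) hdm) hγ₁]
  have hρ₂ : |f' ωs - f' ωr - f'' ωr * (ωs - ωr)| ≤ γ / 2 * (d * m) := by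
    refine (abs_sub_sub_mul_le_of_abs_deriv_sub_le hI hf'' hωr hωs
      fun x hx => hLipf x hx ωr hωr).trans ?_
    rw [← sq_abs, abs_sub_comm]
    linarith [mul_nonneg hγd (sub_nonneg.2 hdm)]
  have key :=
    abs_sub_le_of_hermite_interpolation hfs hinterp hopt hl1 hf''r hl2 hg''r hP hacc hρ₁ hρ₂
  exact le_div_of_le_add_mul_self (κ := γ₁ / ℓ₂ * max e m) hc₄ (abs_nonneg _) hδ
    (key.trans_eq (by ring))

/-- Local superlinear convergence estimate (Theorem 3.3, abstract form):
under the hypotheses of the key error estimate, together with a bound `M` on `|f″|`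
on `I`, the accuracy estimate `|g″(ω_r) − f″(ω_r)| ≤ μ·max{|ω_r − ω⋆|, |ω_{r−1} − ω⋆|}`,
and `1 − (γ₁/ℓ₂)·δ ≥ c₄ > 0` where
`δ = max{|ω_{r+1} − ω⋆|, |ω_r − ω⋆|, |ω_{r−1} − ω⋆|}`, one has
`|ω_{r+1} − ω⋆| ≤ ν·|ω_r − ω⋆|·max{|ω_{r−1} − ω⋆|, |ω_r − ω⋆|}` with
`ν = (μM/(ℓ₁ℓ₂) + γ/(2ℓ₁) + γ₁/ℓ₂)/c₄`. -/
theorem local_superlinear_convergence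
    (I : Set ℝ) (hI : Convex ℝ I)
    (ωs ωrm1 ωr ωr1 : ℝ) (hωs : ωs ∈ I) (hωrm1 : ωrm1 ∈ I) (hωr : ωr ∈ I)
    (hωr1 : ωr1 ∈ I)
    (f f' f'' g g' g'' g''' : ℝ → ℝ) (γ γ₁ ℓ₁ ℓ₂ M μ c₄ : ℝ)
    (hf' : ∀ x ∈ I, HasDerivAt f (f' x) x)
    (hf'' : ∀ x ∈ I, HasDerivAt f' (f'' x) x)
    (hfs : f' ωs = 0)
    (hLipf : ∀ x ∈ I, ∀ y ∈ I, |f'' x - f'' y| ≤ γ * |x - y|)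
    (hl1 : 0 < ℓ₁) (hf''r : ℓ₁ ≤ |f'' ωr|)
    (hfM : ∀ x ∈ I, |f'' x| ≤ M)
    (hg' : ∀ x ∈ I, HasDerivAt g (g' x) x)
    (hg'' : ∀ x ∈ I, HasDerivAt g' (g'' x) x)
    (hg''' : ∀ x ∈ I, HasDerivAt g'' (g''' x) x)
    (hg3 : ∀ x ∈ I, |g''' x| ≤ γ₁)
    (hl2 : 0 < ℓ₂) (hg''r : ℓ₂ ≤ |g'' ωr|)
    (hinterp : f' ωr = g' ωr) (hopt : g' ωr1 = 0)
    (hacc : |g'' ωr - f'' ωr| ≤ μ * max |ωr - ωs| |ωrm1 - ωs|)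
    (hc₄ : 0 < c₄)
    (hδ : 1 - (γ₁ / ℓ₂) * max |ωr1 - ωs| (max |ωr - ωs| |ωrm1 - ωs|) ≥ c₄) :
    |ωr1 - ωs| ≤
      ((μ * M / (ℓ₁ * ℓ₂) + γ / (2 * ℓ₁) + γ₁ / ℓ₂) / c₄) *
        |ωr - ωs| * max |ωrm1 - ωs| |ωr - ωs| :=
  local_superlinear_convergence_general I hI ωs ωrm1 ωr ωr1 hωs hωr hωr1 f' f'' g' g'' g''' γ γ₁ ℓ₁
    ℓ₂ M μ c₄ hf'' hfs hLipf hl1 hf''r hfM hg'' hg''' hg3 hl2 hg''r hinterp hopt hacc hc₄ hδ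
end
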